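/- Let X be a Banach space satisfying the metric π-property and let Y be a uniformly convex Banach space. Then NAπ(X ⊗π Y) is ‖·‖π-dense in X ⊗π Y. -/

import Mathlib

noncomputable section

open scoped BigOperators

/-- The predicate stating that the Banach space `Z`, together with the bounded bilinear map
`t : X → Y → Z` and the correspondence `lift` between operators `X → Y*` and functionals on `Z`,
realizes the projective tensor product `X ⊗π Y`.  The field `norm_eq_sInf` says that the norm of
`Z` is the projective norm: `‖z‖π = inf {∑ₙ ‖xₙ‖‖yₙ‖ : z = ∑ₙ xₙ ⊗ yₙ}`, and the `lift` fields
encode the canonical isometric identification `(X ⊗π Y)* = L(X, Y*)`. -/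
structure IsProjTensorProduct (X Y Z : Type*)
    [NormedAddCommGroup X] [NormedSpace ℝ X]
    [NormedAddCommGroup Y] [NormedSpace ℝ Y]
    [NormedAddCommGroup Z] [NormedSpace ℝ Z]
    (t : X →L[ℝ] Y →L[ℝ] Z)
    (lift : (X →L[ℝ] (Y →L[ℝ] ℝ)) → (Z →L[ℝ] ℝ)) : Prop where
  norm_tmul_le : ∀ (x : X) (y : Y), ‖t x y‖ ≤ ‖x‖ * ‖y‖
  exists_rep : ∀ z : Z, ∃ (x : ℕ → X) (y : ℕ → Y),
    Summable (fun n => ‖x n‖ * ‖y n‖) ∧ HasSum (fun n => t (x n) (y n)) z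
  norm_eq_sInf : ∀ z : Z, ‖z‖ = sInf {r : ℝ | ∃ (x : ℕ → X) (y : ℕ → Y),
    Summable (fun n => ‖x n‖ * ‖y n‖) ∧ HasSum (fun n => t (x n) (y n)) z ∧
    r = ∑' n, ‖x n‖ * ‖y n‖}
  lift_tmul : ∀ (G : X →L[ℝ] (Y →L[ℝ] ℝ)) (x : X) (y : Y), lift G (t x y) = G x y
  norm_lift : ∀ G : X →L[ℝ] (Y →L[ℝ] ℝ), ‖lift G‖ = ‖G‖
  lift_surjective : Function.Surjective lift

/-- An element `z ∈ X ⊗π Y` attains its projective norm if it admits a representation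
`z = ∑ₙ xₙ ⊗ yₙ` with `∑ₙ ‖xₙ‖‖yₙ‖ < ∞` and `‖z‖π = ∑ₙ ‖xₙ‖‖yₙ‖`. -/
def AttainsProjNorm {X Y Z : Type*}
    [NormedAddCommGroup X] [NormedSpace ℝ X]
    [NormedAddCommGroup Y] [NormedSpace ℝ Y]
    [NormedAddCommGroup Z] [NormedSpace ℝ Z]
    (t : X →L[ℝ] Y →L[ℝ] Z) (z : Z) : Prop :=
  ∃ (x : ℕ → X) (y : ℕ → Y),
    Summable (fun n => ‖x n‖ * ‖y n‖) ∧ HasSum (fun n => t (x n) (y n)) z ∧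
    ‖z‖ = ∑' n, ‖x n‖ * ‖y n‖

/-- A Banach space `X` has the metric π-property: for every ε > 0 and finite set of unit
vectors there is a finite dimensional `1`-complemented subspace (the range of a norm-one
projection) containing ε-approximations of all of them. -/
def MetricPiProperty (X : Type*) [NormedAddCommGroup X] [NormedSpace ℝ X] : Prop :=
  ∀ ε : ℝ, 0 < ε → ∀ s : Finset X, (∀ x ∈ s, ‖x‖ = 1) →
    ∃ P : X →L[ℝ] X, IsIdempotentElem P ∧ ‖P‖ = 1 ∧
      FiniteDimensional ℝ (LinearMap.range (P : X →ₗ[ℝ] X)) ∧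
      ∀ x ∈ s, ∃ x' ∈ LinearMap.range (P : X →ₗ[ℝ] X), ‖x - x'‖ < ε

/-! By truncation and the metric π-property, every tensor is close to a tensor `z` supported on
`M ⊗π Y`, with `M ⊆ X` finite-dimensional and the range of a norm-one projection `P`; then
near-optimal representations of `z` can be taken with first factors in `M`. Let `G` be a norming
functional of `z`, a bilinear form of norm `≤ 1`. By compactness of the unit sphere of `M` and
uniform convexity of `Y`, the terms of such a representation on which `G` is almost normed can be
moved slightly onto pairs where `G` attains its norm; the other terms carry little mass and are
dropped. The new series is normed by `G` term by term, hence attains its projective norm. -/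

open Filter Topology

section UniformConvexity

variable {E : Type*} [NormedAddCommGroup E] [NormedSpace ℝ E]

theorem ContinuousLinearMap.apply_le_of_norm_le_one {g : E →L[ℝ] ℝ} (hg : ‖g‖ ≤ 1) (u : E) :
    g u ≤ ‖u‖ :=
  (le_abs_self _).trans (g.le_of_opNorm_le hg u |>.trans_eq (one_mul _))

theorem ContinuousLinearMap.exists_norm_le_one_lt_apply (g : E →L[ℝ] ℝ) {r : ℝ} (hr : r < ‖g‖) :
    ∃ u : E, ‖u‖ ≤ 1 ∧ r < g u := by
  obtain ⟨u, hu, hgu⟩ := g.exists_lt_apply_of_lt_opNorm hr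
  rcases lt_abs.1 hgu with hgu | hgu
  · exact ⟨u, hu.le, hgu⟩
  · exact ⟨-u, by simpa using hu.le, by simpa using hgu⟩

variable [UniformConvexSpace E]

theorem exists_forall_norm_sub_lt_of_lt_apply {ε : ℝ} (hε : 0 < ε) :
    ∃ δ, 0 < δ ∧ ∀ g : E →L[ℝ] ℝ, ‖g‖ ≤ 1 → ∀ ⦃u v : E⦄, ‖u‖ ≤ 1 → ‖v‖ ≤ 1 →
      1 - δ < g u → 1 - δ < g v → ‖u - v‖ < ε := by
  obtain ⟨δ, hδ, H⟩ := exists_forall_closed_ball_dist_add_le_two_sub E hε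
  refine ⟨δ / 2, half_pos hδ, fun g hg u v hu hv hgu hgv => ?_⟩
  by_contra! huv
  linarith [H hu hv huv, map_add g u v, g.apply_le_of_norm_le_one hg (u + v)]

theorem ContinuousLinearMap.exists_norm_eq_one_apply_eq_one [CompleteSpace E]
    (g : E →L[ℝ] ℝ) (hg : ‖g‖ = 1) : ∃ v : E, ‖v‖ = 1 ∧ g v = 1 := by
  have hv : ∀ n : ℕ, ∃ v : E, ‖v‖ ≤ 1 ∧ 1 - 1 / ((n : ℝ) + 1) < g v := fun n =>
    g.exists_norm_le_one_lt_apply (by rw [hg]; exact sub_lt_self 1 Nat.one_div_pos_of_nat)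
  choose v hv1 hgv using hv
  have hlim : Tendsto (fun n => g (v n)) atTop (𝓝 1) := by
    refine tendsto_of_tendsto_of_tendsto_of_le_of_le ?_ tendsto_const_nhds (fun n => (hgv n).le)
      (fun n => (g.apply_le_of_norm_le_one hg.le (v n)).trans (hv1 n))
    simpa using (tendsto_const_nhds (x := (1 : ℝ))).sub tendsto_one_div_add_atTop_nhds_zero_nat
  have hcauchy : CauchySeq v := by
    refine Metric.cauchySeq_iff.2 fun ε hε => ?_
    obtain ⟨δ, hδ, H⟩ := exists_forall_norm_sub_lt_of_lt_apply (E := E) hε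
    obtain ⟨N, hN⟩ := eventually_atTop.1 (hlim.eventually (lt_mem_nhds (sub_lt_self 1 hδ)))
    exact ⟨N, fun m hm n hn => by
      rw [dist_eq_norm]; exact H g hg.le (hv1 m) (hv1 n) (hN m hm) (hN n hn)⟩
  obtain ⟨w, hw⟩ := cauchySeq_tendsto_of_complete hcauchy
  have hgw : g w = 1 := tendsto_nhds_unique ((g.continuous.tendsto w).comp hw) hlim
  have hw1 : ‖w‖ ≤ 1 := le_of_tendsto' hw.norm hv1
  exact ⟨w, le_antisymm hw1 (hgw ▸ g.apply_le_of_norm_le_one hg.le w), hgw⟩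

end UniformConvexity

theorem IsCompact.exists_pos_forall_sub_lt_imp_exists_dist_lt {α : Type*} [PseudoMetricSpace α]
    {K : Set α} (hK : IsCompact K) {f : α → ℝ} (hf : ContinuousOn f K) {c : ℝ}
    (hfc : ∀ x ∈ K, f x ≤ c) {ρ : ℝ} (hρ : 0 < ρ) :
    ∃ δ, 0 < δ ∧ ∀ x ∈ K, c - δ < f x → ∃ p ∈ K, f p = c ∧ dist x p < ρ := by
  set far := K ∩ {x | ∀ p ∈ K, f p = c → ρ ≤ dist x p}
  have hfar : IsCompact far := by
    refine hK.inter_right ?_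
    simp only [Set.ofPred_forall]
    exact isClosed_iInter fun p => isClosed_iInter fun _ => isClosed_iInter fun _ =>
      isClosed_le continuous_const (continuous_id.dist continuous_const)
  rcases far.eq_empty_or_nonempty with hempty | hne
  · refine ⟨1, one_pos, fun x hx _ => ?_⟩
    by_contra! H
    exact hempty.subset ⟨hx, H⟩
  · obtain ⟨q, hq, hqmax⟩ := hfar.exists_isMaxOn hne (hf.mono Set.inter_subset_left)
    have hqc : f q < c := (hfc q hq.1).lt_of_ne fun hq' => (hq.2 q hq.1 hq').not_gt (by simpa)
    refine ⟨c - f q, sub_pos.2 hqc, fun x hx hfx => ?_⟩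
    by_contra! H
    have hxq : f x ≤ f q := hqmax ⟨hx, H⟩
    linarith

section BishopPhelpsBollobas

variable {E F : Type*} [NormedAddCommGroup E] [NormedSpace ℝ E]
  [NormedAddCommGroup F] [NormedSpace ℝ F]

/-- The Bishop–Phelps–Bollobás approximation property of the bilinear form `G` at scale
`(ε, δ)`. -/
def HasBPBApprox (G : E →L[ℝ] F →L[ℝ] ℝ) (ε δ : ℝ) : Prop :=
  ∀ ⦃u : E⦄ ⦃b : F⦄, ‖u‖ = 1 → ‖b‖ = 1 → 1 - δ < G u b →
    ∃ p v, ‖p‖ = 1 ∧ ‖v‖ = 1 ∧ G p v = 1 ∧ ‖u - p‖ < ε ∧ ‖b - v‖ < ε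

/-- A norm-one point `p` of the compact unit sphere of `E` near `u` with `‖G p‖ = 1` exists by
compactness; uniform convexity then forces the point `v` where `G p` attains its norm to be
close to `b`. -/
theorem ContinuousLinearMap.exists_hasBPBApprox [ProperSpace E] [CompleteSpace F]
    [UniformConvexSpace F] (G : E →L[ℝ] F →L[ℝ] ℝ) (hG : ‖G‖ ≤ 1) {ε : ℝ} (hε : 0 < ε) :
    ∃ δ, 0 < δ ∧ HasBPBApprox G ε δ := by
  obtain ⟨δ₁, hδ₁, hUC⟩ := exists_forall_norm_sub_lt_of_lt_apply (E := F) hε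
  have hGu : ∀ u : E, ‖u‖ = 1 → ‖G u‖ ≤ 1 := fun u hu =>
    (G.le_of_opNorm_le hG u).trans_eq (by rw [hu, one_mul])
  obtain ⟨δ₂, hδ₂, hK⟩ := (isCompact_sphere (0 : E) 1).exists_pos_forall_sub_lt_imp_exists_dist_lt
    (f := fun u => ‖G u‖) G.continuous.norm.continuousOn
    (fun u hu => hGu u (mem_sphere_zero_iff_norm.1 hu)) (lt_min hε (half_pos hδ₁))
  refine ⟨min δ₂ (δ₁ / 2), lt_min hδ₂ (half_pos hδ₁), fun u b hu hb hub => ?_⟩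
  have hGub : G u b ≤ ‖G u‖ :=
    (le_abs_self _).trans ((G u).le_opNorm b) |>.trans_eq (by rw [hb, mul_one])
  obtain ⟨p, hp, hGp, hup⟩ := hK u (mem_sphere_zero_iff_norm.2 hu)
    (by linarith [min_le_left δ₂ (δ₁ / 2)])
  rw [dist_eq_norm] at hup
  obtain ⟨v, hv, hGpv⟩ := (G p).exists_norm_eq_one_apply_eq_one hGp
  have hGpb : G u b - G p b ≤ ‖u - p‖ := by
    rw [← sub_apply, ← map_sub]
    exact (le_abs_self _).trans (G.le_of_opNorm₂_le_of_le hG le_rfl hb.le) |>.trans_eq (by ring)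
  refine ⟨p, v, mem_sphere_zero_iff_norm.1 hp, hv, hGpv, hup.trans_le (min_le_left _ _),
    hUC (G p) hGp.le hb.le hv.le ?_ (by linarith)⟩
  linarith [min_le_right δ₂ (δ₁ / 2), min_le_right ε (δ₁ / 2)]

variable {Z : Type*} [NormedAddCommGroup Z] [NormedSpace ℝ Z]
  {t : E →L[ℝ] F →L[ℝ] Z} {G : E →L[ℝ] F →L[ℝ] ℝ} {ε δ : ℝ}

theorem ContinuousLinearMap.norm_apply_apply_le_of_norm_le_one (ht : ‖t‖ ≤ 1) (a : E) (b : F) :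
    ‖t a b‖ ≤ ‖a‖ * ‖b‖ :=
  (t.le_of_opNorm₂_le_of_le ht le_rfl le_rfl).trans_eq (by rw [one_mul])

/-- A term on which `G` is almost normed is moved onto a norm-attaining pair; any other term is
dropped, at a cost controlled by its defect `‖a‖ * ‖b‖ - G a b`. -/
theorem HasBPBApprox.exists_apply_eq_norm_mul_norm (hbpb : HasBPBApprox G ε δ) (ht : ‖t‖ ≤ 1)
    (hG : ‖G‖ ≤ 1) (hε : 0 ≤ ε) (hδ : 0 < δ) (a : E) (b : F) :
    ∃ p v, G p v = ‖p‖ * ‖v‖ ∧ ‖p‖ * ‖v‖ ≤ ‖a‖ * ‖b‖ ∧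
      ‖t a b - t p v‖ ≤ 2 * ε * (‖a‖ * ‖b‖) + (‖a‖ * ‖b‖ - G a b) / δ := by
  have hdefect : 0 ≤ (‖a‖ * ‖b‖ - G a b) / δ := by
    refine div_nonneg (sub_nonneg.2 ?_) hδ.le
    exact (le_abs_self _).trans (G.norm_apply_apply_le_of_norm_le_one hG a b)
  by_cases hgood : (1 - δ) * (‖a‖ * ‖b‖) < G a b
  · have ha : a ≠ 0 := by rintro rfl; simp at hgood
    have hb : b ≠ 0 := by rintro rfl; simp at hgood
    obtain ⟨r, u, hr, hu, rfl⟩ : ∃ r : ℝ, ∃ u : E, 0 < r ∧ ‖u‖ = 1 ∧ r • u = a :=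
      ⟨‖a‖, ‖a‖⁻¹ • a, norm_pos_iff.2 ha, norm_smul_inv_norm ha,
        smul_inv_smul₀ (norm_ne_zero_iff.2 ha) a⟩
    obtain ⟨s, w, hs, hw, rfl⟩ : ∃ s : ℝ, ∃ w : F, 0 < s ∧ ‖w‖ = 1 ∧ s • w = b :=
      ⟨‖b‖, ‖b‖⁻¹ • b, norm_pos_iff.2 hb, norm_smul_inv_norm hb,
        smul_inv_smul₀ (norm_ne_zero_iff.2 hb) b⟩
    have hnorm : ‖r • u‖ * ‖s • w‖ = r * s := by
      rw [norm_smul, norm_smul, hu, hw, Real.norm_of_nonneg hr.le, Real.norm_of_nonneg hs.le]; ring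
    have hGrs : G (r • u) (s • w) = (r * s) * G u w := by simp; ring
    rw [hnorm, hGrs] at hgood hdefect ⊢
    obtain ⟨p, v, hp, hv, hGpv, hup, hwv⟩ :=
      hbpb hu hw (lt_of_mul_lt_mul_left (by linarith) (mul_pos hr hs).le)
    have hnorm' : ‖p‖ * ‖(r * s) • v‖ = r * s := by
      rw [norm_smul, hp, hv, Real.norm_of_nonneg (mul_pos hr hs).le]; ring
    refine ⟨p, (r * s) • v, by simp [hGpv, hnorm'], hnorm'.le, ?_⟩
    have hsplit :
        t (r • u) (s • w) - t p ((r * s) • v) = (r * s) • (t (u - p) w + t p (w - v)) := by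
      simp only [map_smul, map_sub, sub_apply, smul_apply, smul_sub, smul_add]
      module
    have hterm : ‖t (u - p) w + t p (w - v)‖ ≤ 2 * ε := by
      refine (norm_add_le _ _).trans ?_
      have h₁ := t.norm_apply_apply_le_of_norm_le_one ht (u - p) w
      have h₂ := t.norm_apply_apply_le_of_norm_le_one ht p (w - v)
      rw [hw, mul_one] at h₁
      rw [hp, one_mul] at h₂
      linarith
    calc ‖t (r • u) (s • w) - t p ((r * s) • v)‖ ≤ r * s * (2 * ε) := by
          rw [hsplit, norm_smul, Real.norm_of_nonneg (mul_pos hr hs).le]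
          exact mul_le_mul_of_nonneg_left hterm (mul_pos hr hs).le
      _ ≤ _ := by linarith
  · refine ⟨0, 0, by simp, by simp; positivity, ?_⟩
    have hdrop : ‖a‖ * ‖b‖ ≤ (‖a‖ * ‖b‖ - G a b) / δ := by
      rw [le_div_iff₀ hδ]; linarith
    have htab := t.norm_apply_apply_le_of_norm_le_one ht a b
    have hmove : 0 ≤ 2 * ε * (‖a‖ * ‖b‖) := by positivity
    simp only [map_zero, sub_zero]
    linarith

theorem HasBPBApprox.exists_hasSum_norm_sub_le [CompleteSpace Z] (hbpb : HasBPBApprox G ε δ)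
    (ht : ‖t‖ ≤ 1) (hG : ‖G‖ ≤ 1) (hε : 0 ≤ ε) (hδ : 0 < δ) {x : ℕ → E} {y : ℕ → F} {z : Z}
    (hs : Summable fun n => ‖x n‖ * ‖y n‖) (hz : HasSum (fun n => t (x n) (y n)) z) :
    ∃ (p : ℕ → E) (v : ℕ → F) (w : Z), (∀ n, G (p n) (v n) = ‖p n‖ * ‖v n‖) ∧
      Summable (fun n => ‖p n‖ * ‖v n‖) ∧ HasSum (fun n => t (p n) (v n)) w ∧
      ‖z - w‖ ≤ 2 * ε * ∑' n, ‖x n‖ * ‖y n‖ +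
        (∑' n, ‖x n‖ * ‖y n‖ - ∑' n, G (x n) (y n)) / δ := by
  choose p v hGpv hpv hdist using
    fun n => hbpb.exists_apply_eq_norm_mul_norm ht hG hε hδ (x n) (y n)
  have hs' : Summable fun n => ‖p n‖ * ‖v n‖ := hs.of_nonneg_of_le (fun n => by positivity) hpv
  obtain ⟨w, hw⟩ : Summable fun n => t (p n) (v n) :=
    hs'.of_norm_bounded fun n => t.norm_apply_apply_le_of_norm_le_one ht _ _
  have hGs : Summable fun n => G (x n) (y n) :=
    hs.of_norm_bounded fun n => G.norm_apply_apply_le_of_norm_le_one hG _ _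
  have hbound : Summable fun n =>
      2 * ε * (‖x n‖ * ‖y n‖) + (‖x n‖ * ‖y n‖ - G (x n) (y n)) / δ :=
    (hs.mul_left _).add ((hs.sub hGs).div_const _)
  have hdiff : Summable fun n => ‖t (x n) (y n) - t (p n) (v n)‖ :=
    hbound.of_nonneg_of_le (fun n => norm_nonneg _) hdist
  refine ⟨p, v, w, hGpv, hs', hw, ?_⟩
  calc ‖z - w‖ = ‖∑' n, (t (x n) (y n) - t (p n) (v n))‖ := by rw [(hz.sub hw).tsum_eq]
    _ ≤ ∑' n, ‖t (x n) (y n) - t (p n) (v n)‖ := norm_tsum_le_tsum_norm hdiff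
    _ ≤ ∑' n, (2 * ε * (‖x n‖ * ‖y n‖) + (‖x n‖ * ‖y n‖ - G (x n) (y n)) / δ) :=
      hdiff.tsum_le_tsum hdist hbound
    _ = _ := by
      rw [(hs.mul_left _).tsum_add ((hs.sub hGs).div_const _), tsum_mul_left, tsum_div_const,
        hs.tsum_sub hGs]

end BishopPhelpsBollobas

theorem MetricPiProperty.exists_forall_norm_sub_le {X : Type*} [NormedAddCommGroup X]
    [NormedSpace ℝ X] (hX : MetricPiProperty X) {ε : ℝ} (hε : 0 < ε) (s : Finset X) :
    ∃ P : X →L[ℝ] X, IsIdempotentElem P ∧ ‖P‖ = 1 ∧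
      FiniteDimensional ℝ (LinearMap.range (P : X →ₗ[ℝ] X)) ∧
      ∃ a : X → X, (∀ x, a x ∈ LinearMap.range (P : X →ₗ[ℝ] X)) ∧
        ∀ x ∈ s, ‖x - a x‖ ≤ ε * ‖x‖ := by
  classical
  obtain ⟨P, hPi, hP1, hPfin, hP⟩ := hX ε hε ((s.filter (· ≠ 0)).image fun x => ‖x‖⁻¹ • x)
    (by simp only [Finset.mem_image, Finset.mem_filter]
        rintro _ ⟨x, ⟨-, hx⟩, rfl⟩
        exact norm_smul_inv_norm hx)
  have ha : ∀ x, ∃ a ∈ LinearMap.range (P : X →ₗ[ℝ] X), x ∈ s → ‖x - a‖ ≤ ε * ‖x‖ := by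
    intro x
    by_cases hx : x ∈ s ∧ x ≠ 0
    · obtain ⟨a, ha, hxa⟩ := hP _ (Finset.mem_image_of_mem _ (Finset.mem_filter.2 hx))
      refine ⟨‖x‖ • a, Submodule.smul_mem _ _ ha, fun _ => ?_⟩
      calc ‖x - ‖x‖ • a‖ = ‖x‖ * ‖‖x‖⁻¹ • x - a‖ := by
            rw [← norm_smul_of_nonneg (norm_nonneg x), smul_sub,
              smul_inv_smul₀ (norm_ne_zero_iff.2 hx.2)]
        _ ≤ ε * ‖x‖ := by rw [mul_comm]; exact mul_le_mul_of_nonneg_right hxa.le (norm_nonneg x)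
    · refine ⟨0, Submodule.zero_mem _, fun hxs => ?_⟩
      obtain rfl : x = 0 := by tauto
      simp
  choose a ha hxa using ha
  exact ⟨P, hPi, hP1, hPfin, a, ha, hxa⟩

namespace IsProjTensorProduct

variable {X Y Z : Type*} [NormedAddCommGroup X] [NormedSpace ℝ X]
  [NormedAddCommGroup Y] [NormedSpace ℝ Y] [NormedAddCommGroup Z] [NormedSpace ℝ Z]
  {t : X →L[ℝ] Y →L[ℝ] Z} {lift : (X →L[ℝ] (Y →L[ℝ] ℝ)) → (Z →L[ℝ] ℝ)}

theorem opNorm_le_one (h : IsProjTensorProduct X Y Z t lift) : ‖t‖ ≤ 1 :=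
  t.opNorm_le_bound₂ zero_le_one fun x y => by rw [one_mul]; exact h.norm_tmul_le x y

theorem hasSum_lift (h : IsProjTensorProduct X Y Z t lift) (G : X →L[ℝ] Y →L[ℝ] ℝ)
    {x : ℕ → X} {y : ℕ → Y} {z : Z} (hz : HasSum (fun n => t (x n) (y n)) z) :
    HasSum (fun n => G (x n) (y n)) (lift G z) := by
  simpa only [h.lift_tmul] using (lift G).hasSum hz

theorem eq_of_forall_lift_eq (h : IsProjTensorProduct X Y Z t lift) {z w : Z}
    (hzw : ∀ G, lift G z = lift G w) : z = w := by
  obtain ⟨g, -, hg⟩ := exists_dual_vector'' ℝ (z - w)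
  obtain ⟨G, rfl⟩ := h.lift_surjective g
  rw [← sub_eq_zero, ← norm_eq_zero]
  exact hg.symm.trans (by rw [map_sub, hzw, sub_self])

theorem exists_lift_eq_norm (h : IsProjTensorProduct X Y Z t lift) (z : Z) :
    ∃ G, ‖G‖ ≤ 1 ∧ lift G z = ‖z‖ := by
  obtain ⟨g, hg, hgz⟩ := exists_dual_vector'' ℝ z
  obtain ⟨G, rfl⟩ := h.lift_surjective g
  exact ⟨G, h.norm_lift G ▸ hg, hgz⟩

theorem norm_le_tsum (h : IsProjTensorProduct X Y Z t lift) {x : ℕ → X} {y : ℕ → Y} {z : Z}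
    (hs : Summable fun n => ‖x n‖ * ‖y n‖) (hz : HasSum (fun n => t (x n) (y n)) z) :
    ‖z‖ ≤ ∑' n, ‖x n‖ * ‖y n‖ := by
  rw [h.norm_eq_sInf z]
  refine csInf_le ⟨0, ?_⟩ ⟨x, y, hs, hz, rfl⟩
  rintro _ ⟨x', y', -, -, rfl⟩
  exact tsum_nonneg fun n => by positivity

theorem exists_hasSum_tsum_lt (h : IsProjTensorProduct X Y Z t lift) (z : Z) {η : ℝ}
    (hη : 0 < η) : ∃ (x : ℕ → X) (y : ℕ → Y), Summable (fun n => ‖x n‖ * ‖y n‖) ∧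
      HasSum (fun n => t (x n) (y n)) z ∧ ∑' n, ‖x n‖ * ‖y n‖ < ‖z‖ + η := by
  obtain ⟨x₀, y₀, hs₀, hz₀⟩ := h.exists_rep z
  have hlt := lt_add_of_pos_right ‖z‖ hη
  rw [h.norm_eq_sInf z] at hlt ⊢
  obtain ⟨_, ⟨x, y, hs, hz, rfl⟩, hlt⟩ := exists_lt_of_csInf_lt (Set.nonempty_of_mem (by
    exact ⟨x₀, y₀, hs₀, hz₀, rfl⟩)) hlt
  exact ⟨x, y, hs, hz, hlt⟩

theorem attainsProjNorm_of_apply_eq (h : IsProjTensorProduct X Y Z t lift)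
    {G : X →L[ℝ] Y →L[ℝ] ℝ} (hG : ‖G‖ ≤ 1) {x : ℕ → X} {y : ℕ → Y} {z : Z}
    (hs : Summable fun n => ‖x n‖ * ‖y n‖) (hz : HasSum (fun n => t (x n) (y n)) z)
    (hGxy : ∀ n, G (x n) (y n) = ‖x n‖ * ‖y n‖) : AttainsProjNorm t z := by
  refine ⟨x, y, hs, hz, (h.norm_le_tsum hs hz).antisymm ?_⟩
  calc ∑' n, ‖x n‖ * ‖y n‖ = lift G z := by
        simp_rw [← hGxy]; exact (h.hasSum_lift G hz).tsum_eq
    _ ≤ ‖z‖ := (le_abs_self _).trans ((lift G).le_of_opNorm_le (h.norm_lift G ▸ hG) z)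
      |>.trans_eq (one_mul _)

/-- Apply `P` to the first factors of a near-optimal representation: `P` is a contraction and
fixes `z`. -/
theorem exists_hasSum_mem_range_tsum_lt [CompleteSpace Z] (h : IsProjTensorProduct X Y Z t lift)
    {P : X →L[ℝ] X} (hP : ‖P‖ ≤ 1) {z : Z} (hz : ∀ G, lift (G.comp P) z = lift G z) {η : ℝ}
    (hη : 0 < η) : ∃ (x : ℕ → X) (y : ℕ → Y), (∀ n, x n ∈ LinearMap.range (P : X →ₗ[ℝ] X)) ∧
      Summable (fun n => ‖x n‖ * ‖y n‖) ∧ HasSum (fun n => t (x n) (y n)) z ∧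
      ∑' n, ‖x n‖ * ‖y n‖ < ‖z‖ + η := by
  obtain ⟨x, y, hs, hz', hlt⟩ := h.exists_hasSum_tsum_lt z hη
  have hle : ∀ n, ‖P (x n)‖ * ‖y n‖ ≤ ‖x n‖ * ‖y n‖ := fun n =>
    mul_le_mul_of_nonneg_right ((P.le_of_opNorm_le hP _).trans_eq (one_mul _)) (norm_nonneg _)
  have hPs : Summable fun n => ‖P (x n)‖ * ‖y n‖ := hs.of_nonneg_of_le (fun n => by positivity) hle
  obtain ⟨w, hw⟩ : Summable fun n => t (P (x n)) (y n) :=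
    hPs.of_norm_bounded fun n => h.norm_tmul_le _ _
  obtain rfl : w = z := h.eq_of_forall_lift_eq fun G => by
    rw [← hz G, ← (h.hasSum_lift G hw).tsum_eq, ← (h.hasSum_lift (G.comp P) hz').tsum_eq]
    rfl
  exact ⟨fun n => P (x n), y, fun n => LinearMap.mem_range_self _ _, hPs, hw,
    (hPs.tsum_le_tsum hle hs).trans_lt hlt⟩

theorem exists_attainsProjNorm_norm_sub_lt [CompleteSpace Y] [UniformConvexSpace Y]
    [CompleteSpace Z] (h : IsProjTensorProduct X Y Z t lift) {P : X →L[ℝ] X} (hP : ‖P‖ ≤ 1)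
    [FiniteDimensional ℝ (LinearMap.range (P : X →ₗ[ℝ] X))] {z : Z}
    (hz : ∀ G, lift (G.comp P) z = lift G z) {ε : ℝ} (hε : 0 < ε) :
    ∃ w, AttainsProjNorm t w ∧ ‖z - w‖ < ε := by
  set M := LinearMap.range (P : X →ₗ[ℝ] X)
  obtain ⟨G, hG, hGz⟩ := h.exists_lift_eq_norm z
  have hGM : ‖G.comp M.subtypeL‖ ≤ 1 :=
    (G.opNorm_comp_le _).trans (mul_le_one₀ hG (norm_nonneg _) M.norm_subtypeL_le)
  have htM : ‖t.comp M.subtypeL‖ ≤ 1 :=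
    (t.opNorm_comp_le _).trans (mul_le_one₀ h.opNorm_le_one (norm_nonneg _) M.norm_subtypeL_le)
  obtain ⟨ε', hε', hε'z⟩ : ∃ ε', 0 < ε' ∧ 2 * ε' * (‖z‖ + 1) = ε / 2 :=
    ⟨ε / (4 * (‖z‖ + 1)), by positivity, by field_simp; ring⟩
  obtain ⟨δ, hδ, hbpb⟩ := (G.comp M.subtypeL).exists_hasBPBApprox hGM hε'
  obtain ⟨x, y, hxM, hs, hxy, hlt⟩ :=
    h.exists_hasSum_mem_range_tsum_lt hP hz (η := min 1 (δ * ε / 2)) (by positivity)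
  obtain ⟨p, v, w, hGpv, hs', hw, hzw⟩ := hbpb.exists_hasSum_norm_sub_le htM hGM hε'.le hδ
    (x := fun n => ⟨x n, hxM n⟩) hs hxy
  refine ⟨w, h.attainsProjNorm_of_apply_eq hG hs' hw hGpv, hzw.trans_lt ?_⟩
  show 2 * ε' * ∑' n, ‖x n‖ * ‖y n‖ + (∑' n, ‖x n‖ * ‖y n‖ - ∑' n, G (x n) (y n)) / δ < ε
  rw [(h.hasSum_lift G hxy).tsum_eq, hGz]
  have hmass : 2 * ε' * ∑' n, ‖x n‖ * ‖y n‖ < ε / 2 :=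
    hε'z ▸ mul_lt_mul_of_pos_left (by linarith [min_le_left 1 (δ * ε / 2)]) (by positivity)
  have hdefect : (∑' n, ‖x n‖ * ‖y n‖ - ‖z‖) / δ < ε / 2 := by
    rw [div_lt_iff₀ hδ]; linarith [min_le_right 1 (δ * ε / 2)]
  linarith

theorem exists_lift_comp_eq_norm_sub_lt (h : IsProjTensorProduct X Y Z t lift)
    (hX : MetricPiProperty X) (z : Z) {ε : ℝ} (hε : 0 < ε) :
    ∃ P : X →L[ℝ] X, ‖P‖ ≤ 1 ∧ FiniteDimensional ℝ (LinearMap.range (P : X →ₗ[ℝ] X)) ∧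
      ∃ z₁ : Z, (∀ G, lift (G.comp P) z₁ = lift G z₁) ∧ ‖z - z₁‖ < ε := by
  classical
  obtain ⟨x, y, -, hxy⟩ := h.exists_rep z
  obtain ⟨N, hN⟩ : ∃ N, ‖z - ∑ n ∈ Finset.range N, t (x n) (y n)‖ < ε / 2 := by
    have := (tendsto_iff_norm_sub_tendsto_zero.1 hxy.tendsto_sum_nat).eventually
      (gt_mem_nhds (half_pos hε))
    obtain ⟨N, hN⟩ := this.exists
    exact ⟨N, by rwa [norm_sub_rev]⟩
  set C := ∑ n ∈ Finset.range N, ‖x n‖ * ‖y n‖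
  have hC : 0 ≤ C := Finset.sum_nonneg fun n _ => by positivity
  obtain ⟨P, hPi, hP1, hPfin, a, ha, hxa⟩ :=
    hX.exists_forall_norm_sub_le (ε := ε / 2 / (C + 1)) (by positivity)
      ((Finset.range N).image x)
  have hPa : ∀ u, P (a u) = a u := fun u =>
    (LinearMap.IsIdempotentElem.mem_range_iff
      (ContinuousLinearMap.IsIdempotentElem.toLinearMap hPi)).1 (ha u)
  refine ⟨P, hP1.le, hPfin, ∑ n ∈ Finset.range N, t (a (x n)) (y n), fun G => ?_, ?_⟩
  · simp only [map_sum, h.lift_tmul, ContinuousLinearMap.comp_apply, hPa]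
  · have hz₀z₁ : ‖∑ n ∈ Finset.range N, t (x n) (y n) - ∑ n ∈ Finset.range N, t (a (x n)) (y n)‖
        ≤ ε / 2 / (C + 1) * C := by
      rw [← Finset.sum_sub_distrib, Finset.mul_sum]
      refine (norm_sum_le _ _).trans (Finset.sum_le_sum fun n hn => ?_)
      rw [← sub_apply, ← map_sub, ← mul_assoc]
      exact (h.norm_tmul_le _ _).trans (mul_le_mul_of_nonneg_right
        (hxa _ (Finset.mem_image_of_mem x hn)) (norm_nonneg _))
    have hC' : ε / 2 / (C + 1) * C < ε / 2 := by
      rw [div_mul_eq_mul_div, div_lt_iff₀ (by positivity)]; nlinarith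
    linarith [norm_sub_le_norm_sub_add_norm_sub z (∑ n ∈ Finset.range N, t (x n) (y n))
      (∑ n ∈ Finset.range N, t (a (x n)) (y n))]

end IsProjTensorProduct

theorem tensor_normAttaining_dense_of_metricPi_uniformConvex_general
    {X Y Z : Type*} [NormedAddCommGroup X] [NormedSpace ℝ X]
    [NormedAddCommGroup Y] [NormedSpace ℝ Y] [CompleteSpace Y] [UniformConvexSpace Y]
    [NormedAddCommGroup Z] [NormedSpace ℝ Z] [CompleteSpace Z]
    (t : X →L[ℝ] Y →L[ℝ] Z) (lift : (X →L[ℝ] (Y →L[ℝ] ℝ)) → (Z →L[ℝ] ℝ))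
    (h : IsProjTensorProduct X Y Z t lift)
    (hX : MetricPiProperty X) :
    Dense {z : Z | AttainsProjNorm t z} := by
  refine Metric.dense_iff.2 fun z r hr => ?_
  obtain ⟨P, hP, hPfin, z₁, hz₁, hzz₁⟩ := h.exists_lift_comp_eq_norm_sub_lt hX z (half_pos hr)
  obtain ⟨w, hw, hz₁w⟩ := h.exists_attainsProjNorm_norm_sub_lt hP hz₁ (half_pos hr)
  refine ⟨w, ?_, hw⟩
  rw [Metric.mem_ball, dist_comm, dist_eq_norm]
  linarith [norm_sub_le_norm_sub_add_norm_sub z z₁ w]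

/-- If `X` satisfies the metric π-property and `Y` is uniformly convex,
then the set of norm-attaining tensors is dense in `X ⊗π Y`. -/
theorem tensor_normAttaining_dense_of_metricPi_uniformConvex
    {X Y Z : Type*} [NormedAddCommGroup X] [NormedSpace ℝ X] [CompleteSpace X]
    [NormedAddCommGroup Y] [NormedSpace ℝ Y] [CompleteSpace Y] [UniformConvexSpace Y]
    [NormedAddCommGroup Z] [NormedSpace ℝ Z] [CompleteSpace Z]
    (t : X →L[ℝ] Y →L[ℝ] Z) (lift : (X →L[ℝ] (Y →L[ℝ] ℝ)) → (Z →L[ℝ] ℝ))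
    (h : IsProjTensorProduct X Y Z t lift)
    (hX : MetricPiProperty X) :
    Dense {z : Z | AttainsProjNorm t z} :=
  tensor_normAttaining_dense_of_metricPi_uniformConvex_general t lift h hX
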